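/- The equations of motion 𝒴̇_i = [𝒲, 𝒵_i] + [λ_i 𝒲 + Σ_k 𝒴_k, 𝒴_i] and 𝒵̇_i = [λ_i 𝒲 + Σ_k 𝒴_k, 𝒵_i] (i = 1,…,N) are equivalent to the Lax equation 𝓛̇(λ) = [𝓛(λ), 𝓜(λ)] holding identically in λ, where 𝓛(λ) = 𝒲 + Σ_i [ 𝒴_i/(λ−λ_i) + 𝒵_i/(λ−λ_i)² ] and 𝓜(λ) = Σ_i (1/(λ−λ_i)) [ λ_i 𝒴_i + λ 𝒵_i/(λ−λ_i) ]. -/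

import Mathlib

/-!
Since `λ_i (λ - λ_i)⁻¹ = λ (λ - λ_i)⁻¹ - 1`, the second Lax matrix is
`𝓜(λ) = λ (𝓛(λ) - 𝒲) - Σ_k 𝒴_k`, hence `[𝓛, 𝓜] = [λ𝒲 + Σ_k 𝒴_k, 𝓛]`. Splitting
`λ𝒲 = λ_i𝒲 + (λ - λ_i)𝒲` in the `i`-th term lowers its pole order by one, and the residues and
double-pole coefficients of `[𝓛, 𝓜]` at `λ_i` become exactly the right-hand sides of the
equations of motion. Conversely, the coefficients of a sum of poles of order at most two at
distinct points are determined by the function: multiply by `(λ - λ_j)²` and let `λ → λ_j`.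
-/

open Matrix Complex

noncomputable section

/-- `σ³ = (i/2)σ_z`. -/
def sigma3 : Matrix (Fin 2) (Fin 2) ℂ := (1 / 2 : ℂ) • !![I, 0; 0, -I]

/-- The Lax matrix `𝓛(λ) = 𝒲 + Σ_i [ 𝒴_i/(λ−λ_i) + 𝒵_i/(λ−λ_i)² ]`. -/
def laxL {N : ℕ} (w : ℝ) (lam : Fin N → ℂ) (Y Z : Fin N → Matrix (Fin 2) (Fin 2) ℂ)
    (l : ℂ) : Matrix (Fin 2) (Fin 2) ℂ :=
  (w : ℂ) • sigma3 + ∑ i : Fin N, ((l - lam i)⁻¹ • Y i + ((l - lam i) ^ 2)⁻¹ • Z i)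

/-- The matrix `𝓜(λ) = Σ_i (λ−λ_i)⁻¹ [ λ_i 𝒴_i + λ 𝒵_i/(λ−λ_i) ]`. -/
def laxM {N : ℕ} (lam : Fin N → ℂ) (Y Z : Fin N → Matrix (Fin 2) (Fin 2) ℂ)
    (l : ℂ) : Matrix (Fin 2) (Fin 2) ℂ :=
  ∑ i : Fin N, (l - lam i)⁻¹ • (lam i • Y i + (l * (l - lam i)⁻¹) • Z i)

open Filter Topology

attribute [local instance] LieRing.ofAssociativeRing

section PrincipalPart

variable {ι K E : Type*} [Fintype ι] [Field K] [AddCommGroup E] [Module K E]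

def principalPart (lam : ι → K) (Y Z : ι → E) (l : K) : E :=
  ∑ i, ((l - lam i)⁻¹ • Y i + ((l - lam i) ^ 2)⁻¹ • Z i)

theorem principalPart_sub (lam : ι → K) (Y Z Y₁ Z₁ : ι → E)
    (l : K) :
    principalPart lam (Y - Y₁) (Z - Z₁) l
      = principalPart lam Y Z l - principalPart lam Y₁ Z₁ l := by
  simp only [principalPart, Pi.sub_apply, smul_sub, ← Finset.sum_sub_distrib]
  exact Finset.sum_congr rfl fun _ _ => by abel

theorem lie_principalPart {L : Type*} [LieRing L] [LieAlgebra K L] (D : L) (lam : ι → K)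
    (Y Z : ι → L) (l : K) :
    ⁅D, principalPart lam Y Z l⁆ = principalPart lam (fun i => ⁅D, Y i⁆) (fun i => ⁅D, Z i⁆) l := by
  simp only [principalPart, lie_sum, lie_add, lie_smul]

theorem sum_inv_sub_smul_eq_smul_principalPart_sub {lam : ι → K} {l : K}
    (hl : ∀ i, l ≠ lam i) (Y Z : ι → E) :
    ∑ i, (l - lam i)⁻¹ • (lam i • Y i + (l * (l - lam i)⁻¹) • Z i)
      = l • principalPart lam Y Z l - ∑ i, Y i := by
  simp only [principalPart, Finset.smul_sum, ← Finset.sum_sub_distrib]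
  refine Finset.sum_congr rfl fun i _ => ?_
  have := sub_ne_zero.2 (hl i)
  simp only [smul_add, smul_smul]
  match_scalars
  · field_simp
    ring
  · field_simp

theorem lie_smul_add_sum_principalPart {L : Type*} [LieRing L] [LieAlgebra K L] (C : L)
    {lam : ι → K} {l : K} (hl : ∀ i, l ≠ lam i) (Y Z : ι → L) :
    ⁅l • C + ∑ k, Y k, C + principalPart lam Y Z l⁆
      = principalPart lam (fun i => ⁅C, Z i⁆ + ⁅lam i • C + ∑ k, Y k, Y i⁆)
          (fun i => ⁅lam i • C + ∑ k, Y k, Z i⁆) l := by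
  have hterm : ∀ i, (l - lam i)⁻¹ • ⁅l • C + ∑ k, Y k, Y i⁆
        + ((l - lam i) ^ 2)⁻¹ • ⁅l • C + ∑ k, Y k, Z i⁆
      = ⁅C, Y i⁆ + ((l - lam i)⁻¹ • (⁅C, Z i⁆ + ⁅lam i • C + ∑ k, Y k, Y i⁆)
          + ((l - lam i) ^ 2)⁻¹ • ⁅lam i • C + ∑ k, Y k, Z i⁆) := by
    intro i
    have := sub_ne_zero.2 (hl i)
    simp only [add_lie, smul_lie, smul_add, smul_smul]
    match_scalars <;> field_simp <;> ring
  rw [lie_add, lie_principalPart, principalPart, Finset.sum_congr rfl fun i _ => hterm i,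
    Finset.sum_add_distrib, ← lie_sum, add_lie, smul_lie, lie_self, smul_zero, zero_add,
    ← lie_skew, neg_add_cancel_left, principalPart]

theorem lie_add_principalPart_smul_principalPart_sub_sum {L : Type*} [LieRing L]
    [LieAlgebra K L] (C : L) {lam : ι → K} {l : K} (hl : ∀ i, l ≠ lam i) (Y Z : ι → L) :
    ⁅C + principalPart lam Y Z l, l • principalPart lam Y Z l - ∑ k, Y k⁆
      = principalPart lam (fun i => ⁅C, Z i⁆ + ⁅lam i • C + ∑ k, Y k, Y i⁆)
          (fun i => ⁅lam i • C + ∑ k, Y k, Z i⁆) l := by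
  have hM : l • principalPart lam Y Z l - ∑ k, Y k
      = l • (C + principalPart lam Y Z l) - (l • C + ∑ k, Y k) := by
    rw [smul_add]; abel
  rw [hM, lie_sub, lie_smul, lie_self, smul_zero, zero_sub, lie_skew,
    lie_smul_add_sum_principalPart C hl]

end PrincipalPart

theorem ContinuousAt.eq_of_eventually_nhdsNE {X Y : Type*} [TopologicalSpace X] [TopologicalSpace Y]
    [T2Space Y] {f : X → Y} {x : X} [(𝓝[≠] x).NeBot] (hf : ContinuousAt f x) {c : Y}
    (h : ∀ᶠ y in 𝓝[≠] x, f y = c) : f x = c :=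
  tendsto_nhds_unique (hf.tendsto.mono_left nhdsWithin_le_nhds)
    (tendsto_const_nhds.congr' (EventuallyEq.symm h))

section Uniqueness

variable {𝕜 E : Type*} [NontriviallyNormedField 𝕜] [AddCommGroup E] [Module 𝕜 E]
  [TopologicalSpace E] [T2Space E] [IsTopologicalAddGroup E] [ContinuousSMul 𝕜 E]

theorem eq_zero_of_inv_smul_add_inv_sq_smul_add {g : 𝕜 → E} {x : 𝕜} (hg : ContinuousAt g x)
    {a b : E} (h : ∀ᶠ y in 𝓝[≠] x, (y - x)⁻¹ • a + ((y - x) ^ 2)⁻¹ • b + g y = 0) :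
    a = 0 ∧ b = 0 := by
  have hne : ∀ᶠ y in 𝓝[≠] x, y - x ≠ 0 :=
    eventually_mem_nhdsWithin.mono fun y hy => sub_ne_zero.2 hy
  have hb : b = 0 := by
    have hcont : ContinuousAt (fun y => (y - x) • a + b + (y - x) ^ 2 • g y) x := by fun_prop
    simpa using hcont.eq_of_eventually_nhdsNE <| by
      filter_upwards [h, hne] with y hy hyx
      rw [← smul_zero ((y - x) ^ 2), ← hy]
      simp only [smul_add, smul_smul]
      match_scalars <;> field_simp
  have hcont : ContinuousAt (fun y => a + (y - x) • g y) x := by fun_prop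
  refine ⟨?_, hb⟩
  simpa using hcont.eq_of_eventually_nhdsNE <| by
    filter_upwards [h, hne] with y hy hyx
    rw [← smul_zero (y - x), ← hy, hb]
    simp only [smul_add, smul_smul, smul_zero, add_zero]
    match_scalars <;> field_simp

theorem eq_zero_of_principalPart_eq_zero {ι : Type*} [Fintype ι] {lam : ι → 𝕜}
    (hlam : Function.Injective lam) {Y Z : ι → E}
    (h : ∀ l, (∀ i, l ≠ lam i) → principalPart lam Y Z l = 0) : Y = 0 ∧ Z = 0 := by
  classical
  suffices ∀ j, Y j = 0 ∧ Z j = 0 from ⟨funext fun j => (this j).1, funext fun j => (this j).2⟩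
  intro j
  have hpoles : ∀ᶠ l in 𝓝[≠] lam j, ∀ i, l ≠ lam i := by
    refine eventually_all.2 fun i => ?_
    by_cases hij : i = j
    · exact hij ▸ eventually_mem_nhdsWithin
    · exact nhdsWithin_le_nhds (eventually_ne_nhds fun h => hij (hlam h).symm)
  refine eq_zero_of_inv_smul_add_inv_sq_smul_add
    (g := fun l => ∑ i ∈ Finset.univ.erase j, ((l - lam i)⁻¹ • Y i + ((l - lam i) ^ 2)⁻¹ • Z i))
    (tendsto_finsetSum _ fun i hi => ?_) (hpoles.mono fun l hl => ?_)
  · have : lam j - lam i ≠ 0 := sub_ne_zero.2 fun h => Finset.ne_of_mem_erase hi (hlam h).symm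
    exact (show ContinuousAt (fun l => (l - lam i)⁻¹ • Y i + ((l - lam i) ^ 2)⁻¹ • Z i) (lam j)
      by fun_prop (disch := simp [this]))
  · rw [← h l hl, principalPart, ← Finset.add_sum_erase _ _ (Finset.mem_univ j)]

theorem eq_of_principalPart_eq {ι : Type*} [Fintype ι] {lam : ι → 𝕜}
    (hlam : Function.Injective lam) {Y Z Y₁ Z₁ : ι → E}
    (h : ∀ l, (∀ i, l ≠ lam i) → principalPart lam Y Z l = principalPart lam Y₁ Z₁ l) :
    Y = Y₁ ∧ Z = Z₁ := by
  have := eq_zero_of_principalPart_eq_zero hlam (Y := Y - Y₁) (Z := Z - Z₁) fun l hl => by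
    rw [principalPart_sub, h l hl, sub_self]
  exact ⟨sub_eq_zero.1 this.1, sub_eq_zero.1 this.2⟩

end Uniqueness

theorem laxL_mul_laxM_sub_laxM_mul_laxL {N : ℕ} (w : ℝ) (lam : Fin N → ℂ)
    (Y Z : Fin N → Matrix (Fin 2) (Fin 2) ℂ) {l : ℂ} (hl : ∀ i, l ≠ lam i) :
    laxL w lam Y Z l * laxM lam Y Z l - laxM lam Y Z l * laxL w lam Y Z l
      = principalPart lam
          (fun i => ((w : ℂ) • sigma3 * Z i - Z i * (w : ℂ) • sigma3)
            + ((lam i • ((w : ℂ) • sigma3) + ∑ k, Y k) * Y i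
              - Y i * (lam i • ((w : ℂ) • sigma3) + ∑ k, Y k)))
          (fun i => (lam i • ((w : ℂ) • sigma3) + ∑ k, Y k) * Z i
            - Z i * (lam i • ((w : ℂ) • sigma3) + ∑ k, Y k)) l := by
  have hlie := lie_add_principalPart_smul_principalPart_sub_sum ((w : ℂ) • sigma3) hl Y Z
  simp only [Ring.lie_def] at hlie
  rw [laxM, sum_inv_sub_smul_eq_smul_principalPart_sub hl]
  exact hlie

theorem lax_equation_equiv_general {N : ℕ} (w : ℝ) (lam : Fin N → ℂ)
    (hlam : Function.Injective lam)
    (Y Z Y' Z' : Fin N → ℝ → Matrix (Fin 2) (Fin 2) ℂ)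
    (t : ℝ) :
    (∀ i : Fin N,
        Y' i t = ((w : ℂ) • sigma3 * Z i t - Z i t * (w : ℂ) • sigma3)
          + ((lam i • ((w : ℂ) • sigma3) + ∑ k : Fin N, Y k t) * Y i t
            - Y i t * (lam i • ((w : ℂ) • sigma3) + ∑ k : Fin N, Y k t)) ∧
        Z' i t = ((lam i • ((w : ℂ) • sigma3) + ∑ k : Fin N, Y k t) * Z i t
          - Z i t * (lam i • ((w : ℂ) • sigma3) + ∑ k : Fin N, Y k t)))
    ↔
    (∀ l : ℂ, (∀ i, l ≠ lam i) →
        (∑ i : Fin N, ((l - lam i)⁻¹ • Y' i t + ((l - lam i) ^ 2)⁻¹ • Z' i t))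
          = laxL w lam (fun i => Y i t) (fun i => Z i t) l
              * laxM lam (fun i => Y i t) (fun i => Z i t) l
            - laxM lam (fun i => Y i t) (fun i => Z i t) l
              * laxL w lam (fun i => Y i t) (fun i => Z i t) l) := by
  have hkey := fun l (hl : ∀ i, l ≠ lam i) =>
    laxL_mul_laxM_sub_laxM_mul_laxL w lam (fun i => Y i t) (fun i => Z i t) hl
  constructor
  · intro hEOM l hl
    rw [hkey l hl, principalPart]
    exact Finset.sum_congr rfl fun i _ => by rw [(hEOM i).1, (hEOM i).2]
  · intro hLax
    obtain ⟨hY', hZ'⟩ := eq_of_principalPart_eq hlam (Y := fun i => Y' i t)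
      (Z := fun i => Z' i t) fun l hl => (hLax l hl).trans (hkey l hl)
    exact fun i => ⟨congrFun hY' i, congrFun hZ' i⟩

/-- The equations of motion `𝒴̇_i = [𝒲, 𝒵_i] + [λ_i 𝒲 + Σ_k 𝒴_k, 𝒴_i]`,
`𝒵̇_i = [λ_i 𝒲 + Σ_k 𝒴_k, 𝒵_i]` are equivalent to the Lax equation
`𝓛̇(λ) = [𝓛(λ), 𝓜(λ)]` holding identically in `λ ∉ {λ_1,…,λ_N}`. -/
theorem lax_equation_equiv {N : ℕ} (w : ℝ) (lam : Fin N → ℂ)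
    (hlam : Function.Injective lam)
    (Y Z Y' Z' : Fin N → ℝ → Matrix (Fin 2) (Fin 2) ℂ)
    (hY : ∀ i t a b, HasDerivAt (fun s => Y i s a b) (Y' i t a b) t)
    (hZ : ∀ i t a b, HasDerivAt (fun s => Z i s a b) (Z' i t a b) t)
    (t : ℝ) :
    (∀ i : Fin N,
        Y' i t = ((w : ℂ) • sigma3 * Z i t - Z i t * (w : ℂ) • sigma3)
          + ((lam i • ((w : ℂ) • sigma3) + ∑ k : Fin N, Y k t) * Y i t
            - Y i t * (lam i • ((w : ℂ) • sigma3) + ∑ k : Fin N, Y k t)) ∧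
        Z' i t = ((lam i • ((w : ℂ) • sigma3) + ∑ k : Fin N, Y k t) * Z i t
          - Z i t * (lam i • ((w : ℂ) • sigma3) + ∑ k : Fin N, Y k t)))
    ↔
    (∀ l : ℂ, (∀ i, l ≠ lam i) →
        (∑ i : Fin N, ((l - lam i)⁻¹ • Y' i t + ((l - lam i) ^ 2)⁻¹ • Z' i t))
          = laxL w lam (fun i => Y i t) (fun i => Z i t) l
              * laxM lam (fun i => Y i t) (fun i => Z i t) l
            - laxM lam (fun i => Y i t) (fun i => Z i t) l
              * laxL w lam (fun i => Y i t) (fun i => Z i t) l) :=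
  lax_equation_equiv_general w lam hlam Y Z Y' Z' t
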